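/- arXiv:1805.10159 — 7 statements merged into one kernel-verified Lean document; each statement's English description precedes it below -/
import Mathlib

section
/- Every positive Boolean function f on {0,1}^n with k ≥ 0 relevant variables has at least k+1 extremal points (minimal ones plus maximal zeros). -/
/-- `f` is positive (monotone): componentwise `x ≤ y` and `f x = 1` imply `f y = 1`. -/
def Positive {n : ℕ} (f : (Fin n → Bool) → Bool) : Prop :=
  ∀ x y : Fin n → Bool, x ≤ y → f x = true → f y = true

/-- `y` is a minimal true point of `f`. -/
def MinOne {n : ℕ} (f : (Fin n → Bool) → Bool) (y : Fin n → Bool) : Prop :=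
  f y = true ∧ ∀ z : Fin n → Bool, z ≤ y → z ≠ y → f z = false

/-- `y` is a maximal false point of `f`. -/
def MaxZero {n : ℕ} (f : (Fin n → Bool) → Bool) (y : Fin n → Bool) : Prop :=
  f y = false ∧ ∀ z : Fin n → Bool, y ≤ z → z ≠ y → f z = true

/-- Variable `i` is relevant for `f`. -/
def Relevant {n : ℕ} (f : (Fin n → Bool) → Bool) (i : Fin n) : Prop :=
  ∃ x : Fin n → Bool, f (Function.update x i false) ≠ f (Function.update x i true)


/-!
Induct on the number of relevant variables, proving a relative statement: for positive `g < h`,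
`|Rel g \ Rel h| + 1 ≤ |Min g \ Min h| + |{q ∈ Max g | h q}|`, where `Min`/`Max` are the minimal
ones and maximal zeros; the theorem is the case `h = ⊤`. If every variable relevant for `g` is
relevant for `h`, a maximal zero of `g` above a point where `g < h` gives the `1`. Otherwise take
`j` relevant for `g` but not for `h`: the cofactors of `g` at `x_j` satisfy `g₀ < g₁ ≤ h`, so the
statement holds for the pairs `(g₀, g₁)` and `(g₁, h)`, and the extremal points counted for these
pairs lift injectively, by setting `x_j`, to those counted for `(g, h)`. The variable `j` itself is
paid for by the second pair when `g₁ ≠ h`, and by a minimal one of `g₁` at which `g₀` is false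
when `g₁ = h`.
-/

open Function

variable {n : ℕ} {g h : (Fin n → Bool) → Bool} {x p q : Fin n → Bool} {i j : Fin n} {b : Bool}

def cofactor (g : (Fin n → Bool) → Bool) (j : Fin n) (b : Bool) : (Fin n → Bool) → Bool :=
  fun x => g (update x j b)

def relevantVars (g : (Fin n → Bool) → Bool) : Set (Fin n) := {i | Relevant g i}

def minOnes (g : (Fin n → Bool) → Bool) : Set (Fin n → Bool) := {p | MinOne g p}

def maxZeros (g : (Fin n → Bool) → Bool) : Set (Fin n → Bool) := {q | MaxZero g q}

theorem Positive.monotone {f : (Fin n → Bool) → Bool} (hf : Positive f) : Monotone f :=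
  fun x y hxy => Bool.le_iff_imp.2 (hf x y hxy)

theorem cofactor_apply_of_eq (hx : x j = b) : cofactor g j b x = g x := by
  rw [cofactor, ← hx, update_eq_self]

@[simp]
theorem cofactor_update (c : Bool) : cofactor g j b (update x j c) = cofactor g j b x := by
  simp only [cofactor, update_idem]

theorem Monotone.cofactor (hg : Monotone g) (j : Fin n) (b : Bool) : Monotone (cofactor g j b) :=
  fun _ _ hxy => hg (update_le_update_iff.2 ⟨le_rfl, fun k _ => hxy k⟩)

theorem cofactor_false_le_cofactor_true (hg : Monotone g) (j : Fin n) :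
    cofactor g j false ≤ cofactor g j true :=
  fun _ => hg (update_le_update_iff.2 ⟨Bool.false_le _, fun _ _ => le_rfl⟩)

theorem relevant_iff_cofactor_ne : Relevant g j ↔ cofactor g j false ≠ cofactor g j true :=
  Function.ne_iff.symm

theorem apply_update_of_not_relevant (hj : ¬ Relevant g j) (x : Fin n → Bool) (b : Bool) :
    g (update x j b) = g x := by
  simp only [Relevant, not_exists, not_not] at hj
  have hconst : ∀ c, g (update x j c) = g (update x j false) := by
    rintro (_ | _)
    exacts [rfl, (hj x).symm]
  rw [hconst, ← hconst (x j), update_eq_self]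

theorem cofactor_le (hgh : g ≤ h) (hj : ¬ Relevant h j) : cofactor g j b ≤ h :=
  fun x => (hgh _).trans_eq (apply_update_of_not_relevant hj x b)

theorem not_relevant_cofactor : ¬ Relevant (cofactor g j b) j := by
  rintro ⟨x, hx⟩
  exact hx (by rw [cofactor_update, cofactor_update])

theorem Relevant.of_cofactor (hi : Relevant (cofactor g j b) i) : Relevant g i := by
  have hij : i ≠ j := by
    rintro rfl
    exact not_relevant_cofactor hi
  obtain ⟨x, hx⟩ := hi
  exact ⟨update x j b, by simpa only [cofactor, update_comm hij] using hx⟩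

theorem Relevant.cofactor_false_or_cofactor_true (hi : Relevant g i) (hij : i ≠ j) :
    Relevant (cofactor g j false) i ∨ Relevant (cofactor g j true) i := by
  obtain ⟨x, hx⟩ := hi
  have key : ∀ c, cofactor g j (x j) (update x i c) = g (update x i c) :=
    fun c => cofactor_apply_of_eq (update_of_ne hij.symm c x)
  have hxj : Relevant (cofactor g j (x j)) i := ⟨x, by rwa [key, key]⟩
  revert hxj
  cases x j
  exacts [Or.inl, Or.inr]

theorem ncard_relevantVars_cofactor_lt (hj : Relevant g j) :
    (relevantVars (cofactor g j b)).ncard < (relevantVars g).ncard :=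
  Set.ncard_lt_ncard <| LE.le.ssubset_of_mem_notMem (fun _ hi => Relevant.of_cofactor hi) hj
    not_relevant_cofactor

theorem relevantVars_diff_subset (j : Fin n) (s : Set (Fin n)) :
    relevantVars g \ s ⊆ insert j
      ((relevantVars (cofactor g j false) \ relevantVars (cofactor g j true)) ∪
        (relevantVars (cofactor g j true) \ s)) := by
  rintro i ⟨hi, his⟩
  rcases eq_or_ne i j with rfl | hij
  · exact Set.mem_insert _ _
  by_cases hi1 : Relevant (cofactor g j true) i
  · exact Or.inr (Or.inr ⟨hi1, his⟩)
  · exact Or.inr (Or.inl ⟨(hi.cofactor_false_or_cofactor_true hij).resolve_right hi1, hi1⟩)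

theorem ncard_relevantVars_diff_le (j : Fin n) (s : Set (Fin n)) :
    (relevantVars g \ s).ncard ≤
      (relevantVars (cofactor g j false) \ relevantVars (cofactor g j true)).ncard +
        (relevantVars (cofactor g j true) \ s).ncard + 1 :=
  (Set.ncard_le_ncard (relevantVars_diff_subset j s)).trans <|
    (Set.ncard_insert_le _ _).trans <| Nat.add_le_add_right (Set.ncard_union_le _ _) 1

theorem exists_minOne_le (hx : g x = true) : ∃ p ≤ x, MinOne g p := by
  obtain ⟨p, hpx, hp⟩ := Finite.exists_le_minimal (p := fun y => g y = true) hx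
  exact ⟨p, hpx, hp.prop, fun z hzp hz => Bool.eq_false_iff.2 fun hgz => hz (hp.eq_of_le hgz hzp)⟩

theorem exists_le_maxZero (hx : g x = false) : ∃ q, x ≤ q ∧ MaxZero g q := by
  obtain ⟨q, hxq, hq⟩ := Finite.exists_le_maximal (p := fun y => g y = false) hx
  exact ⟨q, hxq, hq.prop, fun z hqz hz => eq_true_of_ne_false fun hgz => hz (hq.eq_of_ge hgz hqz)⟩

theorem exists_minOne_apply_eq_false_of_lt (hg : Monotone g) (hgh : g < h) :
    ∃ p, MinOne h p ∧ g p = false := by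
  obtain ⟨x, hx⟩ := (Pi.lt_def.1 hgh).2
  obtain ⟨hgx, hhx⟩ := Bool.lt_iff.1 hx
  obtain ⟨p, hpx, hp⟩ := exists_minOne_le hhx
  exact ⟨p, hp, Bool.eq_false_of_le_false (hgx ▸ hg hpx)⟩

theorem exists_maxZero_apply_eq_true_of_lt (hh : Monotone h) (hgh : g < h) :
    ∃ q, MaxZero g q ∧ h q = true := by
  obtain ⟨x, hx⟩ := (Pi.lt_def.1 hgh).2
  obtain ⟨hgx, hhx⟩ := Bool.lt_iff.1 hx
  obtain ⟨q, hxq, hq⟩ := exists_le_maxZero hgx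
  exact ⟨q, hq, Bool.eq_true_of_true_le (hhx ▸ hh hxq)⟩

theorem disjoint_minOnes_maxZeros (g : (Fin n → Bool) → Bool) : Disjoint (minOnes g) (maxZeros g) :=
  Set.disjoint_left.2 fun _ hp hq => Bool.noConfusion (hp.1.symm.trans hq.1)

theorem MinOne.mono (hp : MinOne h p) (hgh : g ≤ h) (hgp : g p = true) : MinOne g p :=
  ⟨hgp, fun z hzp hz => Bool.eq_false_of_le_false (hp.2 z hzp hz ▸ hgh z)⟩

theorem MinOne.apply_eq_false_of_not_relevant (hp : MinOne g p) (hj : ¬ Relevant g j) :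
    p j = false := by
  by_contra hpj
  have hlt := hp.2 _ (update_le_self_iff.2 (Bool.false_le _)) (update_ne_self_iff.2 (Ne.symm hpj))
  rw [apply_update_of_not_relevant hj, hp.1] at hlt
  exact Bool.noConfusion hlt

theorem MaxZero.apply_eq_true_of_not_relevant (hq : MaxZero g q) (hj : ¬ Relevant g j) :
    q j = true := by
  by_contra hqj
  have hgt := hq.2 _ (le_update_self_iff.2 (Bool.le_true _)) (update_ne_self_iff.2 (Ne.symm hqj))
  rw [apply_update_of_not_relevant hj, hq.1] at hgt
  exact Bool.noConfusion hgt

theorem MinOne.of_cofactor_false (hp : MinOne (cofactor g j false) p) : MinOne g p := by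
  have hpj := hp.apply_eq_false_of_not_relevant not_relevant_cofactor
  refine ⟨(cofactor_apply_of_eq hpj).symm.trans hp.1, fun z hzp hz => ?_⟩
  have hzj : z j = false := Bool.eq_false_of_le_false (hpj ▸ hzp j)
  exact (cofactor_apply_of_eq hzj).symm.trans (hp.2 z hzp hz)

theorem MaxZero.of_cofactor_true (hq : MaxZero (cofactor g j true) q) : MaxZero g q := by
  have hqj := hq.apply_eq_true_of_not_relevant not_relevant_cofactor
  refine ⟨(cofactor_apply_of_eq hqj).symm.trans hq.1, fun z hqz hz => ?_⟩
  have hzj : z j = true := Bool.eq_true_of_true_le (hqj ▸ hqz j)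
  exact (cofactor_apply_of_eq hzj).symm.trans (hq.2 z hqz hz)

theorem MinOne.update_of_cofactor_true (hg : Monotone g) (hp : MinOne (cofactor g j true) p)
    (hp0 : cofactor g j false p = false) : MinOne g (update p j true) := by
  have hpj := hp.apply_eq_false_of_not_relevant not_relevant_cofactor
  refine ⟨hp.1, fun z hzp hz => ?_⟩
  have hlow : update z j false ≤ p := by
    simpa only [hpj ▸ update_eq_self j p] using
      update_le_update_iff.2 ⟨le_refl false, (le_update_iff.1 hzp).2⟩
  cases hzj : z j
  · rw [show update z j false = z from hzj ▸ update_eq_self j z] at hlow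
    exact Bool.eq_false_of_le_false (hp0 ▸ cofactor_apply_of_eq hpj ▸ hg hlow)
  · have hne : update z j false ≠ p := by
      rintro rfl
      exact hz (by rw [update_idem, ← hzj, update_eq_self])
    simpa only [cofactor, update_idem, ← hzj, update_eq_self] using hp.2 _ hlow hne

theorem MaxZero.update_of_cofactor_false (hg : Monotone g) (hq : MaxZero (cofactor g j false) q)
    (hq1 : cofactor g j true q = true) : MaxZero g (update q j false) := by
  have hqj := hq.apply_eq_true_of_not_relevant not_relevant_cofactor
  refine ⟨hq.1, fun z hqz hz => ?_⟩
  have hup : q ≤ update z j true := by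
    simpa only [hqj ▸ update_eq_self j q] using
      update_le_update_iff.2 ⟨le_refl true, (update_le_iff.1 hqz).2⟩
  cases hzj : z j
  · have hne : update z j true ≠ q := by
      rintro rfl
      exact hz (by rw [update_idem, ← hzj, update_eq_self])
    simpa only [cofactor, update_idem, ← hzj, update_eq_self] using hq.2 _ hup hne
  · rw [show update z j true = z from hzj ▸ update_eq_self j z] at hup
    exact Bool.eq_true_of_true_le (hq1 ▸ cofactor_apply_of_eq hqj ▸ hg hup)

theorem ncard_minOnes_add_le (hg : Monotone g) (hgh : g ≤ h) (hj : ¬ Relevant h j) :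
    (minOnes (cofactor g j false) \ minOnes (cofactor g j true)).ncard +
      {p ∈ minOnes (cofactor g j true) | p ∈ minOnes h → cofactor g j false p = false}.ncard ≤
      (minOnes g \ minOnes h).ncard := by
  set g₀ := cofactor g j false
  set g₁ := cofactor g j true
  -- a minimal one `p` of `g₁` is a minimal one of `g` if `g₀ p`, and `update p j true` is otherwise
  set lift : (Fin n → Bool) → Fin n → Bool := fun p => if g₀ p then p else update p j true
  have hinj : Set.InjOn lift {p ∈ minOnes g₁ | p ∈ minOnes h → g₀ p = false} :=
    Set.LeftInvOn.injOn (f₁' := (update · j false)) fun p hp => by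
      have hpj := hp.1.apply_eq_false_of_not_relevant not_relevant_cofactor
      by_cases hp0 : g₀ p <;> simp [lift, hp0, hpj ▸ update_eq_self j p]
  rw [← hinj.ncard_image, ← Set.ncard_union_eq]
  · refine Set.ncard_le_ncard (Set.union_subset ?_ ?_)
    · rintro p ⟨hp0, hp1⟩
      exact ⟨hp0.of_cofactor_false, fun hph => hp1 (hph.mono (cofactor_le hgh hj)
        (Bool.le_iff_imp.1 (cofactor_false_le_cofactor_true hg j p) hp0.1))⟩
    · rintro _ ⟨p, ⟨hp1, hph⟩, rfl⟩
      by_cases hp0 : g₀ p = true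
      · simp only [lift, hp0, if_true]
        exact ⟨(hp1.mono (cofactor_false_le_cofactor_true hg j) hp0).of_cofactor_false,
          fun hp => Bool.noConfusion ((hph hp).symm.trans hp0)⟩
      · simp only [lift, hp0]
        refine ⟨hp1.update_of_cofactor_true hg (eq_false_of_ne_true hp0), fun hp => ?_⟩
        simpa using hp.apply_eq_false_of_not_relevant hj
  · rw [Set.disjoint_left]
    rintro _ ⟨hp0, hp1⟩ ⟨p, ⟨hq1, -⟩, rfl⟩
    by_cases hq0 : g₀ p = true
    · simp only [lift, hq0, if_true] at hp1
      exact hp1 hq1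
    · simp only [lift, hq0] at hp0
      simpa using hp0.apply_eq_false_of_not_relevant not_relevant_cofactor

theorem ncard_maxZeros_add_le (hg : Monotone g) (hgh : g ≤ h) (hj : ¬ Relevant h j) :
    (maxZeros (cofactor g j false) ∩ {x | cofactor g j true x = true}).ncard +
      (maxZeros (cofactor g j true) ∩ {x | h x = true}).ncard ≤
      (maxZeros g ∩ {x | h x = true}).ncard := by
  have hinj : Set.InjOn (update · j false)
      (maxZeros (cofactor g j false) ∩ {x | cofactor g j true x = true}) :=
    Set.LeftInvOn.injOn (f₁' := (update · j true)) fun q hq => by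
      have hqj := hq.1.apply_eq_true_of_not_relevant not_relevant_cofactor
      simp [hqj ▸ update_eq_self j q]
  rw [← hinj.ncard_image, ← Set.ncard_union_eq]
  · refine Set.ncard_le_ncard (Set.union_subset ?_ ?_)
    · rintro _ ⟨q, ⟨hq0, hq1⟩, rfl⟩
      refine ⟨hq0.update_of_cofactor_false hg hq1, ?_⟩
      show h (update q j false) = true
      rw [apply_update_of_not_relevant hj]
      exact Bool.le_iff_imp.1 (cofactor_le hgh hj q) hq1
    · exact fun q ⟨hq, hhq⟩ => ⟨hq.of_cofactor_true, hhq⟩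
  · rw [Set.disjoint_left]
    rintro _ ⟨q, ⟨-, -⟩, rfl⟩ ⟨hq1, -⟩
    simpa using hq1.apply_eq_true_of_not_relevant not_relevant_cofactor

theorem ncard_relevantVars_diff_add_one_le {g h : (Fin n → Bool) → Bool} (hg : Monotone g) (hh : Monotone h) (hgh : g < h) :
    (relevantVars g \ relevantVars h).ncard + 1 ≤
      (minOnes g \ minOnes h).ncard + (maxZeros g ∩ {x | h x = true}).ncard := by
  by_cases hsub : relevantVars g ⊆ relevantVars h
  · obtain ⟨q, hq, hhq⟩ := exists_maxZero_apply_eq_true_of_lt hh hgh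
    have : 0 < (maxZeros g ∩ {x | h x = true}).ncard := (Set.ncard_pos (Set.toFinite _)).2 ⟨q, hq, hhq⟩
    rw [Set.sdiff_eq_empty.2 hsub, Set.ncard_empty]
    omega
  obtain ⟨j, hjg, hjh⟩ := Set.not_subset.1 hsub
  have h01 : cofactor g j false < cofactor g j true :=
    (cofactor_false_le_cofactor_true hg j).lt_of_ne (relevant_iff_cofactor_ne.1 hjg)
  have ih01 := ncard_relevantVars_diff_add_one_le (hg.cofactor j false) (hg.cofactor j true) h01
  have hrel := ncard_relevantVars_diff_le (g := g) j (relevantVars h)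
  have hA := ncard_minOnes_add_le hg hgh.le hjh
  have hB := ncard_maxZeros_add_le hg hgh.le hjh
  rcases (cofactor_le (b := true) hgh.le hjh).eq_or_lt with rfl | h1h
  · obtain ⟨p, hp, hp0⟩ := exists_minOne_apply_eq_false_of_lt (hg.cofactor j false) h01
    have : 0 < {p ∈ minOnes (cofactor g j true) |
        p ∈ minOnes (cofactor g j true) → cofactor g j false p = false}.ncard :=
      (Set.ncard_pos (Set.toFinite _)).2 ⟨p, hp, fun _ => hp0⟩
    rw [Set.sdiff_self, Set.ncard_empty] at hrel
    omega
  · have ih1h := ncard_relevantVars_diff_add_one_le (hg.cofactor j true) hh h1h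
    have : (minOnes (cofactor g j true) \ minOnes h).ncard ≤
        {p ∈ minOnes (cofactor g j true) | p ∈ minOnes h → cofactor g j false p = false}.ncard :=
      Set.ncard_le_ncard fun p hp => ⟨hp.1, fun hph => (hp.2 hph).elim⟩
    omega
termination_by (relevantVars g).ncard
decreasing_by all_goals exact ncard_relevantVars_cofactor_lt hjg

theorem extremal_points_lower_bound {n : ℕ}
    (f : (Fin n → Bool) → Bool) (hf : Positive f) :
    {i : Fin n | Relevant f i}.ncard + 1 ≤
      {y : Fin n → Bool | MinOne f y ∨ MaxZero f y}.ncard := by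
  change (relevantVars f).ncard + 1 ≤ (minOnes f ∪ maxZeros f).ncard
  rw [Set.ncard_union_eq (disjoint_minOnes_maxZeros f)]
  have hrel_top : relevantVars (⊤ : (Fin n → Bool) → Bool) = ∅ :=
    Set.eq_empty_of_forall_notMem fun _ ⟨_, hx⟩ => hx rfl
  rcases (le_top : f ≤ ⊤).eq_or_lt with rfl | hlt
  · obtain ⟨p, -, hp⟩ := exists_minOne_le (g := ⊤) (x := ⊥) rfl
    have : 0 < (minOnes ⊤).ncard := (Set.ncard_pos (Set.toFinite _)).2 ⟨p, hp⟩
    rw [hrel_top, Set.ncard_empty]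
    omega
  · have key := ncard_relevantVars_diff_add_one_le (h := ⊤) hf.monotone monotone_const hlt
    rw [hrel_top, Set.sdiff_empty] at key
    exact key.trans <|
      add_le_add (Set.ncard_le_ncard Set.sdiff_subset) (Set.ncard_le_ncard Set.inter_subset_left)
end

section
/- Let f be a positive non-canalyzing Boolean function on {0,1}^n such that for each variable x_i both restrictions f|_{x_i=0} and f|_{x_i=1} are canalyzing. Then for each i there exists a maximal zero of f having 0 in exactly two coordinates, one of which is i, and a minimal one of f having 1 in exactly two coordinates, one of which is i. -/
/-- `f` is canalyzing: fixing some variable to some value makes it constant. -/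
def Canalyzing {n : ℕ} (f : (Fin n → Bool) → Bool) : Prop :=
  ∃ (i : Fin n) (b c : Bool), ∀ x : Fin n → Bool, f (Function.update x i b) = c

/-- The restriction `f|_{x_i = b}`, an `n`-variable function obtained from the
`(n+1)`-variable function `f` by fixing coordinate `i` to `b`. -/
def restrict {n : ℕ} (f : (Fin (n + 1) → Bool) → Bool) (i : Fin (n + 1)) (b : Bool) :
    (Fin n → Bool) → Bool :=
  fun a => f (i.insertNth b a)

/-!
For a positive non-canalyzing `f`, every co-unit vector (a single zero) is a true point, since
otherwise `f|_{x_p=0} ≡ 0`. If `f|_{x_i=0}` is canalyzed by `x_j = b` with value `c`, then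
`b = c`: a positive function canalyzed by a value opposite to its output is constant, and then
`f` would be canalyzed by `x_i`. Also `b = c = 1` is impossible, as `f` would then be canalyzed
by `x_j = 1`. So `f` vanishes whenever `x_i = x_j = 0`, and the vector with zeros exactly at `i`
and `j` is a false point each of whose upper neighbours lies above a co-unit vector: a maximal
zero. The minimal ones come from the same argument for the dual `x ↦ ¬ f (¬ x)`.
-/

open Function

theorem compl_update {ι α : Type*} [DecidableEq ι] [Compl α] (x : ι → α) (i : ι) (a : α) :
    (update x i a)ᶜ = update xᶜ i aᶜ := by
  ext k
  by_cases k = i <;> simp_all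

section

variable {n : ℕ}

theorem compl_insertNth {α : Type*} [Compl α] (i : Fin (n + 1)) (a : α) (x : Fin n → α) :
    (i.insertNth a x)ᶜ = i.insertNth (α := fun _ => α) aᶜ xᶜ := by
  ext k
  cases k using Fin.succAboveCases i <;> simp

@[simp]
theorem restrict_removeNth (f : (Fin (n + 1) → Bool) → Bool) (i : Fin (n + 1)) (b : Bool)
    (x : Fin (n + 1) → Bool) : restrict f i b (i.removeNth x) = f (update x i b) := by
  simp [restrict]

@[simp]
theorem restrict_update_removeNth (f : (Fin (n + 1) → Bool) → Bool) (i : Fin (n + 1))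
    (b : Bool) (j : Fin n) (c : Bool) (x : Fin (n + 1) → Bool) :
    restrict f i b (update (i.removeNth x) j c) = f (update (update x i b) (i.succAbove j) c) := by
  simp [restrict]

namespace Positive

variable {f : (Fin n → Bool) → Bool}

theorem eq_const_of_forall_update (hf : Positive f) {j : Fin n} {b c : Bool}
    (h : ∀ x, f (update x j b) = c) (hbc : b ≠ c) (x : Fin n → Bool) : f x = c := by
  cases b <;> cases c <;> simp only [ne_eq, not_true_eq_false] at hbc
  · exact hf _ _ (update_le_self_iff.2 (Bool.false_le _)) (h x)
  · exact Bool.eq_false_iff.2 fun hx => by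
      simpa [h x] using hf x (update x j true) (le_update_self_iff.2 (Bool.le_true _)) hx

theorem maxZero_of_forall_update (hf : Positive f) {y : Fin n → Bool} (hy : f y = false)
    (hup : ∀ k, y k = false → f (update y k true) = true) : MaxZero f y := by
  refine ⟨hy, fun z hyz hne => ?_⟩
  obtain ⟨k, hk⟩ : ∃ k, y k < z k := Pi.lt_def.1 (lt_of_le_of_ne hyz hne.symm) |>.2
  have hyk : y k = false := by simpa using hk.ne_top
  have hzk : z k = true := by simpa using hk.ne_bot
  exact hf _ _ (update_le_iff.2 ⟨hzk.ge, fun m _ => hyz m⟩) (hup k hyk)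

theorem apply_update_top_false (hf : Positive f) (hnc : ¬ Canalyzing f) (p : Fin n) :
    f (update ⊤ p false) = true := by
  by_contra h
  refine hnc ⟨p, false, false, fun x => Bool.eq_false_iff.2 fun hx => h ?_⟩
  exact hf _ _ (update_le_update_iff.2 ⟨le_rfl, fun _ _ => le_top⟩) hx

theorem restrict {f : (Fin (n + 1) → Bool) → Bool} (hf : Positive f) (i : Fin (n + 1))
    (b : Bool) : Positive (restrict f i b) :=
  fun _ _ hxy => hf _ _ (Fin.insertNth_le_iff.2 ⟨by simp, by simpa using hxy⟩)

end Positive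

theorem exists_maxZero_of_canalyzing_restrict {f : (Fin (n + 1) → Bool) → Bool}
    (hf : Positive f) (hnc : ¬ Canalyzing f) {i : Fin (n + 1)}
    (hi : Canalyzing (restrict f i false)) :
    ∃ y, MaxZero f y ∧ y i = false ∧ {j | y j = false}.ncard = 2 := by
  obtain ⟨j, b, c, h⟩ := hi
  obtain rfl : b = c := by
    by_contra hbc
    refine hnc ⟨i, false, c, fun x => ?_⟩
    rw [← restrict_removeNth f]
    exact (hf.restrict i false).eq_const_of_forall_update h hbc _
  set j' := i.succAbove j
  have hlift (x : Fin (n + 1) → Bool) : f (update (update x i false) j' b) = b := by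
    rw [← restrict_update_removeNth f]
    exact h _
  cases b
  · have hij : i ≠ j' := (Fin.succAbove_ne i j).symm
    set y : Fin (n + 1) → Bool := update (update ⊤ i false) j' false
    have hy (k : Fin (n + 1)) : y k = false ↔ k = i ∨ k = j' := by
      by_cases k = i <;> by_cases k = j' <;> simp_all [y]
    refine ⟨y, hf.maxZero_of_forall_update (hlift ⊤) fun k hk => ?_, (hy i).2 (.inl rfl), ?_⟩
    · obtain hki | hkj := (hy k).1 hk
      · refine hf _ _ (fun m => ?_) (hf.apply_update_top_false hnc j')
        by_cases m = i <;> by_cases m = j' <;> simp_all [y]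
      · refine hf _ _ (fun m => ?_) (hf.apply_update_top_false hnc i)
        by_cases m = i <;> by_cases m = j' <;> simp_all [y]
    · rw [show {k | y k = false} = {i, j'} by ext; exact hy _]
      exact Set.ncard_pair hij
  · -- `f = 1` on `x_i = 0, x_{j'} = 1` spreads upwards to all of `x_{j'} = 1`.
    refine absurd ⟨j', true, true, fun x => hf _ _ ?_ (hlift x)⟩ hnc
    exact update_le_update_iff.2 ⟨le_rfl, fun m _ => update_le_self_iff.2 (Bool.false_le _) m⟩

def dual (f : (Fin n → Bool) → Bool) : (Fin n → Bool) → Bool :=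
  fun x => !(f xᶜ)

@[simp]
theorem dual_apply (f : (Fin n → Bool) → Bool) (x : Fin n → Bool) : dual f x = !(f xᶜ) :=
  rfl

@[simp]
theorem dual_dual (f : (Fin n → Bool) → Bool) : dual (dual f) = f := by
  ext x
  simp

theorem Positive.dual {f : (Fin n → Bool) → Bool} (hf : Positive f) : Positive (dual f) :=
  fun x y hxy hx => by
    simpa using mt (hf _ _ (compl_le_compl hxy)) (by simpa using hx)

theorem Canalyzing.dual {f : (Fin n → Bool) → Bool} (h : Canalyzing f) :
    Canalyzing (dual f) := by
  obtain ⟨i, b, c, h⟩ := h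
  exact ⟨i, !b, !c, fun x => by simp [compl_update, h]⟩

theorem restrict_dual (f : (Fin (n + 1) → Bool) → Bool) (i : Fin (n + 1)) (b : Bool) :
    restrict (dual f) i b = dual (restrict f i (!b)) := by
  ext a
  simp [restrict, compl_insertNth]

theorem MaxZero.minOne_compl_of_dual {f : (Fin n → Bool) → Bool} {y : Fin n → Bool}
    (h : MaxZero (dual f) y) : MinOne f yᶜ := by
  refine ⟨by simpa using h.1, fun z hz hne => ?_⟩
  simpa using h.2 zᶜ (le_compl_comm.1 hz) (fun hzy => hne (by simp [← hzy]))

end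

theorem weight_two_extremal_points {n : ℕ} (f : (Fin (n + 1) → Bool) → Bool)
    (hf : Positive f) (hnc : ¬ Canalyzing f)
    (hres : ∀ (i : Fin (n + 1)) (b : Bool), Canalyzing (restrict f i b)) :
    ∀ i : Fin (n + 1),
      (∃ y : Fin (n + 1) → Bool, MaxZero f y ∧ y i = false ∧
        {j : Fin (n + 1) | y j = false}.ncard = 2) ∧
      (∃ y : Fin (n + 1) → Bool, MinOne f y ∧ y i = true ∧
        {j : Fin (n + 1) | y j = true}.ncard = 2) := by
  intro i
  refine ⟨exists_maxZero_of_canalyzing_restrict hf hnc (hres i false), ?_⟩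
  have hnc' : ¬ Canalyzing (dual f) := fun h => hnc (by simpa using h.dual)
  have hres' : Canalyzing (restrict (dual f) i false) := by
    simpa [restrict_dual] using (hres i true).dual
  obtain ⟨y, hy, hyi, hcard⟩ := exists_maxZero_of_canalyzing_restrict hf.dual hnc' hres'
  exact ⟨yᶜ, hy.minOne_compl_of_dual, by simpa using hyi, by simpa using hcard⟩
end

section
/- Let f be a positive Boolean function on {0,1}^n, let f_0 = f|_{x_n=0} and f_1 = f|_{x_n=1}. If a point a in {0,1}^{n-1} is a maximal zero of f_0 but the point (a,0) is not a maximal zero of f, then a is a maximal zero of f_1. -/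
theorem Fin.snoc_le_snoc_iff {n : ℕ} {α : Type*} [Preorder α] {a b : Fin n → α} {x y : α} :
    (Fin.snoc a x : Fin (n + 1) → α) ≤ Fin.snoc b y ↔ a ≤ b ∧ x ≤ y := by
  simp only [Pi.le_def, Fin.forall_fin_succ', Fin.snoc_castSucc, Fin.snoc_last]

namespace Positive

variable {n : ℕ} {f : (Fin (n + 1) → Bool) → Bool}

theorem snoc_mono (hf : Positive f) {v w : Fin n → Bool} {x y : Bool} (hvw : v ≤ w) (hxy : x ≤ y)
    (h : f (Fin.snoc v x) = true) : f (Fin.snoc w y) = true :=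
  hf _ _ (Fin.snoc_le_snoc_iff.2 ⟨hvw, hxy⟩) h

theorem maxZero_snoc_true_of_maxZero_snoc_false (hf : Positive f) {a : Fin n → Bool}
    (h0 : MaxZero (fun v => f (Fin.snoc v false)) a) (ha : f (Fin.snoc a true) = false) :
    MaxZero (fun v => f (Fin.snoc v true)) a :=
  ⟨ha, fun w haw hwa => hf.snoc_mono le_rfl (Bool.false_le true) (h0.2 w haw hwa)⟩

/-- A false point strictly above `(a, 0)` cannot end in `0`, since `a` is a maximal zero of `f₀`;
so it is some `(w, 1)` with `a ≤ w`, and monotonicity pulls the value `0` down to `(a, 1)`. -/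
theorem snoc_true_eq_false_of_not_maxZero (hf : Positive f) {a : Fin n → Bool}
    (h0 : MaxZero (fun v => f (Fin.snoc v false)) a) (hnot : ¬ MaxZero f (Fin.snoc a false)) :
    f (Fin.snoc a true) = false := by
  obtain ⟨z, haz, hza, hz⟩ : ∃ z, Fin.snoc a false ≤ z ∧ z ≠ Fin.snoc a false ∧ f z = false := by
    simpa [MaxZero, h0.1] using hnot
  rw [← Fin.snoc_init_self z] at haz hza hz
  obtain ⟨haw, -⟩ := Fin.snoc_le_snoc_iff.1 haz
  cases hlast : z (Fin.last n)
  · rw [hlast] at hza hz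
    have hwa : Fin.init z ≠ a := fun h => hza (h ▸ rfl)
    simp [h0.2 _ haw hwa] at hz
  · rw [hlast] at hz
    exact Bool.eq_false_iff.2 fun h => by simp [hf.snoc_mono haw le_rfl h] at hz

end Positive

theorem maximal_zero_of_restriction {n : ℕ} (f : (Fin (n + 1) → Bool) → Bool)
    (hf : Positive f) (a : Fin n → Bool)
    (h0 : MaxZero (fun v : Fin n → Bool => f (Fin.snoc v false)) a)
    (hnot : ¬ MaxZero f (Fin.snoc a false)) :
    MaxZero (fun v : Fin n → Bool => f (Fin.snoc v true)) a :=
  hf.maxZero_snoc_true_of_maxZero_snoc_false h0 (hf.snoc_true_eq_false_of_not_maxZero h0 hnot)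
end

section
/- If f is a Chow function on {0,1}^n, then every restriction of f obtained by fixing some variables to constants is also a Chow function (on the remaining variables). -/
/-- Two Boolean functions on `{0,1}^n` have the same Chow parameters:
the same number of true points, and for each coordinate `i` the same number
of true points with `i`-th coordinate equal to `1`. -/
def SameChowParams {n : ℕ} (f g : (Fin n → Bool) → Bool) : Prop :=
  (Finset.univ.filter (fun x : Fin n → Bool => f x = true)).card =
    (Finset.univ.filter (fun x : Fin n → Bool => g x = true)).card ∧
  ∀ i : Fin n,
    (Finset.univ.filter (fun x : Fin n → Bool => f x = true ∧ x i = true)).card =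
      (Finset.univ.filter (fun x : Fin n → Bool => g x = true ∧ x i = true)).card

/-- A Chow function is uniquely determined by its Chow parameters. -/
def IsChow {n : ℕ} (f : (Fin n → Bool) → Bool) : Prop :=
  ∀ g : (Fin n → Bool) → Bool, SameChowParams f g → g = f

/-! Let `g` have the Chow parameters of the restriction `f_c`. Replacing `f` by `g` on the
subcube where the fixed variables equal `c` (a `Function.extend`) gives a function `F` with the
Chow parameters of `f`: off the subcube nothing changes, and on it every coordinate is either a
constant of `c` or a free variable, whose counts `f_c` and `g` share. Since `f` is Chow, `F = f`,
so `g = f_c`. -/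

open Finset Function

theorem card_filter_eq_of_iff_off_range {α β : Type*} [Fintype α] [Fintype β]
    {φ : β → α} (hφ : Injective φ) {P Q : α → Prop} [DecidablePred P] [DecidablePred Q]
    (hoff : ∀ x, x ∉ Set.range φ → (P x ↔ Q x))
    (hon : #{b | P (φ b)} = #{b | Q (φ b)}) :
    #{x | P x} = #{x | Q x} := by
  classical
  have hsplit : ∀ (R : α → Prop) [DecidablePred R],
      #{x | R x} = #{b | R (φ b)} + #{x | R x ∧ x ∉ Set.range φ} := by
    intro R _
    rw [← card_filter_add_card_filter_not (· ∈ Set.range φ), filter_filter,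
      filter_filter]
    congr 1
    rw [← card_map ⟨φ, hφ⟩]
    congr 1
    ext x
    simp only [mem_filter, mem_univ, true_and, Set.mem_range, mem_map, Embedding.coeFn_mk]
    aesop
  rw [hsplit P, hsplit Q, hon]
  congr 1
  exact congrArg card (filter_congr fun x _ => and_congr_left fun hx => hoff x hx)

theorem SameChowParams.card_filter_sumElim_eq {α : Type*} {m : ℕ}
    {g h : (Fin m → Bool) → Bool} (hgh : SameChowParams g h) (c : α → Bool)
    (s : α ⊕ Fin m) :
    #{a | g a = true ∧ Sum.elim c a s = true} = #{a | h a = true ∧ Sum.elim c a s = true} := by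
  rcases s with j | j
  · cases hc : c j
    · simp [hc]
    · simpa [hc] using hgh.1
  · exact hgh.2 j

section Restriction

variable {n k m : ℕ} (e : Fin k ⊕ Fin m ≃ Fin n) (c : Fin k → Bool)

def plugIn (a : Fin m → Bool) : Fin n → Bool := fun j => Sum.elim c a (e.symm j)

theorem plugIn_injective : Injective (plugIn e c) := by
  intro a a' h
  funext j
  simpa [plugIn] using congrFun h (e (Sum.inr j))

theorem sameChowParams_extend_plugIn {f : (Fin n → Bool) → Bool} {g : (Fin m → Bool) → Bool}
    (hg : SameChowParams (f ∘ plugIn e c) g) :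
    SameChowParams f (extend (plugIn e c) g f) := by
  have hoff : ∀ x, x ∉ Set.range (plugIn e c) → f x = extend (plugIn e c) g f x :=
    fun x hx => (extend_apply' g f x hx).symm
  have hon : ∀ a, extend (plugIn e c) g f (plugIn e c a) = g a :=
    (plugIn_injective e c).extend_apply g f
  refine ⟨card_filter_eq_of_iff_off_range (plugIn_injective e c)
    (fun x hx => by rw [hoff x hx]) ?_, fun i =>
      card_filter_eq_of_iff_off_range (plugIn_injective e c)
        (fun x hx => by rw [hoff x hx]) ?_⟩
  · simp only [hon]
    exact hg.1
  · simp only [hon]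
    exact hg.card_filter_sumElim_eq c (e.symm i)

end Restriction

/-- Any restriction of a Chow function, obtained by fixing the variables indexed by
the left summand (via the partition `e` of the variables) to the constants `c`,
is again a Chow function on the remaining variables. -/
theorem chow_closed_under_restriction {n k m : ℕ} (e : Fin k ⊕ Fin m ≃ Fin n)
    (c : Fin k → Bool) (f : (Fin n → Bool) → Bool) (hf : IsChow f) :
    IsChow (fun a : Fin m → Bool => f (fun j => Sum.elim c a (e.symm j))) := by
  intro g hg
  have hF : extend (plugIn e c) g f = f := hf _ (sameChowParams_extend_plugIn e c hg)
  funext a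
  calc g a = extend (plugIn e c) g f (plugIn e c a) :=
        ((plugIn_injective e c).extend_apply g f a).symm
    _ = f (plugIn e c a) := by rw [hF]
end

section
/- For n ≥ 3, the function g_n = (x₁∧x₂)∨…∨(x₁∧x_n)∨(x₂∧…∧x_n) has exactly 2n extremal points: the n minimal ones are the points with 1's exactly in coordinates {1,i} for 2 ≤ i ≤ n together with (0,1,1,…,1), and the n maximal zeros are the points with 0's exactly in coordinates {1,i} for 2 ≤ i ≤ n together with (1,0,…,0). -/
/-- The function `gₙ = x₁x₂ ∨ x₁x₃ ∨ … ∨ x₁xₙ ∨ x₂x₃⋯xₙ` on `n + 3 ≥ 3` variables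
(coordinate `0` plays the role of `x₁`). -/
def gfun (n : ℕ) : (Fin (n + 3) → Bool) → Bool := fun x =>
  (x 0 && decide (∃ i : Fin (n + 3), i ≠ 0 ∧ x i = true)) ||
    decide (∀ i : Fin (n + 3), i ≠ 0 → x i = true)

/-!
Since `gfun n` is positive, a true point is a minimal one as soon as switching off any single
one of its `1`s makes the function false, and dually for maximal zeros. A minimal one with
`y 0 = 1` lies above some point with support `{0, i}`, which is already true, so it is that
point; one with `y 0 = 0` must have all other coordinates `1`. Dually for maximal zeros. The
extremal points are thus the `n + 3` points with support `{0, i}` (the point `i = 0` being the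
maximal zero with support `{0}`) together with their `n + 3` complements, all distinct.
-/

section Extremal

variable {m : ℕ} {f : (Fin m → Bool) → Bool} {y z : Fin m → Bool}

lemma MinOne.eq_of_le (hy : MinOne f y) (hzy : z ≤ y) (hz : f z = true) : z = y := by
  by_contra hne
  simp [hy.2 z hzy hne] at hz

lemma MaxZero.eq_of_le (hy : MaxZero f y) (hyz : y ≤ z) (hz : f z = false) : z = y := by
  by_contra hne
  simp [hy.2 z hyz hne] at hz

lemma exists_apply_eq_false_and_eq_true_of_lt (h : z < y) : ∃ j, z j = false ∧ y j = true := by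
  obtain ⟨-, j, hj⟩ := Pi.lt_def.1 h
  exact ⟨j, Bool.lt_iff.1 hj⟩

lemma Positive.minOne_of_update (hf : Positive f) (hy : f y = true)
    (hflip : ∀ j, y j = true → f (Function.update y j false) = false) : MinOne f y := by
  refine ⟨hy, fun z hzy hne => Bool.eq_false_iff.2 fun hz => ?_⟩
  obtain ⟨j, hzj, hyj⟩ := exists_apply_eq_false_and_eq_true_of_lt (lt_of_le_of_ne hzy hne)
  have hz_le : z ≤ Function.update y j false := le_update_iff.2 ⟨hzj.le, fun k _ => hzy k⟩
  simpa [hflip j hyj] using hf _ _ hz_le hz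

lemma Positive.maxZero_of_update (hf : Positive f) (hy : f y = false)
    (hflip : ∀ j, y j = false → f (Function.update y j true) = true) : MaxZero f y := by
  refine ⟨hy, fun z hyz hne => ?_⟩
  obtain ⟨j, hyj, hzj⟩ :=
    exists_apply_eq_false_and_eq_true_of_lt (lt_of_le_of_ne hyz (Ne.symm hne))
  exact hf _ _ (update_le_iff.2 ⟨hzj.ge, fun k _ => hyz k⟩) (hflip j hyj)

end Extremal

section Gfun

variable {n : ℕ}

lemma gfun_eq_true_iff (x : Fin (n + 3) → Bool) : gfun n x = true ↔
    (x 0 = true ∧ ∃ i, i ≠ 0 ∧ x i = true) ∨ ∀ i, i ≠ 0 → x i = true := by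
  simp [gfun]

lemma gfun_eq_false_iff (x : Fin (n + 3) → Bool) : gfun n x = false ↔
    (x 0 = true → ∀ i, i ≠ 0 → x i = false) ∧ ∃ i, i ≠ 0 ∧ x i = false := by
  simp [gfun]

lemma positive_gfun : Positive (gfun n) := by
  intro x y hxy
  have hmono : ∀ i, x i = true → y i = true := fun i => Bool.le_iff_imp.1 (hxy i)
  simp only [gfun_eq_true_iff]
  rintro (⟨h0, i, hi, hxi⟩ | hall)
  · exact Or.inl ⟨hmono 0 h0, i, hi, hmono i hxi⟩
  · exact Or.inr fun i hi => hmono i (hall i hi)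

lemma exists_ne_zero_ne (i : Fin (n + 3)) : ∃ k, k ≠ 0 ∧ k ≠ i := by
  by_cases hi : i = ⟨1, by omega⟩
  · exact ⟨⟨2, by omega⟩, by simp [Fin.ext_iff], by simp [hi, Fin.ext_iff]⟩
  · exact ⟨⟨1, by omega⟩, by simp, Ne.symm hi⟩

lemma minOne_gfun_pair {i : Fin (n + 3)} (hi : i ≠ 0) :
    MinOne (gfun n) (fun j => decide (j = 0 ∨ j = i)) := by
  refine positive_gfun.minOne_of_update
    ((gfun_eq_true_iff _).2 (.inl ⟨by simp, i, hi, by simp⟩)) ?_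
  obtain ⟨k, hk0, hki⟩ := exists_ne_zero_ne i
  simp only [decide_eq_true_eq, gfun_eq_false_iff]
  rintro j (rfl | rfl)
  · exact ⟨by simp, k, hk0, by simp [hk0, hki]⟩
  · exact ⟨fun _ l hl => by simp [Function.update_apply, hl], j, hi, by simp⟩

lemma minOne_gfun_compl_zero : MinOne (gfun n) (fun j => decide (j ≠ 0)) := by
  refine positive_gfun.minOne_of_update
    ((gfun_eq_true_iff _).2 (.inr fun i hi => by simpa using hi)) ?_
  simp only [decide_eq_true_eq, gfun_eq_false_iff]
  intro j hj
  exact ⟨by simp [Ne.symm hj], j, hj, by simp⟩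

lemma maxZero_gfun_compl_pair {i : Fin (n + 3)} (hi : i ≠ 0) :
    MaxZero (gfun n) (fun j => decide (j ≠ 0 ∧ j ≠ i)) := by
  refine positive_gfun.maxZero_of_update ((gfun_eq_false_iff _).2 ⟨by simp, i, hi, by simp⟩) ?_
  obtain ⟨k, hk0, hki⟩ := exists_ne_zero_ne i
  simp only [gfun_eq_true_iff]
  intro j hj
  obtain rfl | rfl : j = 0 ∨ j = i := by simpa [or_iff_not_imp_left] using hj
  · exact .inl ⟨by simp, k, hk0, by simp [hk0, hki]⟩
  · exact .inr fun l hl => by by_cases hlj : l = j <;> simp [hl, hlj]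

lemma maxZero_gfun_zero : MaxZero (gfun n) (fun j => decide (j = 0)) := by
  obtain ⟨k, hk0, -⟩ := exists_ne_zero_ne (0 : Fin (n + 3))
  refine positive_gfun.maxZero_of_update
    ((gfun_eq_false_iff _).2 ⟨fun _ l hl => by simpa using hl, k, hk0, by simpa using hk0⟩) ?_
  simp only [gfun_eq_true_iff]
  intro j hj
  have hj0 : j ≠ 0 := by simpa using hj
  exact .inl ⟨by simp [Ne.symm hj0], j, hj0, by simp⟩

lemma minOne_gfun_iff (y : Fin (n + 3) → Bool) : MinOne (gfun n) y ↔
    ((∃ i : Fin (n + 3), i ≠ 0 ∧ y = fun j => decide (j = 0 ∨ j = i)) ∨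
      y = fun j => decide (j ≠ 0)) := by
  refine ⟨fun hy => ?_, ?_⟩
  · have htrue := (gfun_eq_true_iff y).1 hy.1
    by_cases h0 : y 0 = true
    · obtain ⟨i, hi, hyi⟩ : ∃ i, i ≠ 0 ∧ y i = true := by
        obtain ⟨k, hk0, -⟩ := exists_ne_zero_ne (0 : Fin (n + 3))
        exact htrue.elim (·.2) fun hall => ⟨k, hk0, hall k hk0⟩
      refine .inl ⟨i, hi, (hy.eq_of_le (fun j => ?_) ?_).symm⟩
      · by_cases hj : j = 0 ∨ j = i
        · rcases hj with rfl | rfl <;> simp [h0, hyi]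
        · simp [hj]
      · exact (gfun_eq_true_iff _).2 (.inl ⟨by simp, i, hi, by simp⟩)
    · have hall := htrue.resolve_left fun h => h0 h.1
      exact .inr (funext fun j => by by_cases hj : j = 0 <;> simp_all)
  · rintro (⟨i, hi, rfl⟩ | rfl)
    exacts [minOne_gfun_pair hi, minOne_gfun_compl_zero]

lemma maxZero_gfun_iff (y : Fin (n + 3) → Bool) : MaxZero (gfun n) y ↔
    ((∃ i : Fin (n + 3), i ≠ 0 ∧ y = fun j => decide (j ≠ 0 ∧ j ≠ i)) ∨
      y = fun j => decide (j = 0)) := by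
  refine ⟨fun hy => ?_, ?_⟩
  · obtain ⟨hzero, i, hi, hyi⟩ := (gfun_eq_false_iff y).1 hy.1
    by_cases h0 : y 0 = true
    · exact .inr (funext fun j => by by_cases hj : j = 0 <;> simp_all)
    · refine .inl ⟨i, hi, (hy.eq_of_le (fun j => ?_) ?_).symm⟩
      · by_cases hj : j = 0 ∨ j = i
        · rcases hj with rfl | rfl <;> simp_all
        · simp_all
      · exact (gfun_eq_false_iff _).2 ⟨by simp, i, hi, by simp⟩
  · rintro (⟨i, hi, rfl⟩ | rfl)
    exacts [maxZero_gfun_compl_pair hi, maxZero_gfun_zero]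

end Gfun

lemma eq_of_forall_eq_zero_or_iff {m : ℕ} [NeZero m] {i i' : Fin m}
    (h : ∀ j, j = 0 ∨ j = i ↔ j = 0 ∨ j = i') : i = i' := by
  grind [h i, h i']

lemma injective_pair (n : ℕ) :
    Function.Injective fun (i : Fin (n + 3)) (j : Fin (n + 3)) => decide (j = 0 ∨ j = i) :=
  fun _ _ h => eq_of_forall_eq_zero_or_iff fun j => decide_eq_decide.1 (congrFun h j)

lemma injective_compl_pair (n : ℕ) :
    Function.Injective fun (i : Fin (n + 3)) (j : Fin (n + 3)) => decide (j ≠ 0 ∧ j ≠ i) :=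
  fun _ _ h => eq_of_forall_eq_zero_or_iff fun j => by
    simpa only [ne_eq, ← not_or, not_iff_not] using decide_eq_decide.1 (congrFun h j)

lemma setOf_minOne_or_maxZero_gfun (n : ℕ) :
    {y | MinOne (gfun n) y ∨ MaxZero (gfun n) y} =
      Set.range (fun (i : Fin (n + 3)) j => decide (j = 0 ∨ j = i)) ∪
        Set.range (fun (i : Fin (n + 3)) j => decide (j ≠ 0 ∧ j ≠ i)) := by
  ext y
  simp only [Set.mem_ofPred_eq, minOne_gfun_iff, maxZero_gfun_iff, Set.mem_union, Set.mem_range]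
  constructor
  · rintro ((⟨i, -, rfl⟩ | rfl) | (⟨i, -, rfl⟩ | rfl))
    · exact .inl ⟨i, rfl⟩
    · exact .inr ⟨0, by simp⟩
    · exact .inr ⟨i, rfl⟩
    · exact .inl ⟨0, by simp⟩
  · rintro (⟨i, rfl⟩ | ⟨i, rfl⟩) <;> rcases eq_or_ne i 0 with rfl | hi
    · exact .inr (.inr (by simp))
    · exact .inl (.inl ⟨i, hi, rfl⟩)
    · exact .inl (.inr (by simp))
    · exact .inr (.inl ⟨i, hi, rfl⟩)

lemma ncard_setOf_minOne_or_maxZero_gfun (n : ℕ) :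
    {y | MinOne (gfun n) y ∨ MaxZero (gfun n) y}.ncard = 2 * (n + 3) := by
  have hdisj : Disjoint (Set.range (fun (i : Fin (n + 3)) j => decide (j = 0 ∨ j = i)))
      (Set.range (fun (i : Fin (n + 3)) j => decide (j ≠ 0 ∧ j ≠ i))) :=
    Set.disjoint_left.2 fun _ ⟨_, h⟩ ⟨_, h'⟩ => by
      simpa [← h, ← h'] using congrFun (h.trans h'.symm) 0
  rw [setOf_minOne_or_maxZero_gfun, Set.ncard_union_eq hdisj,
    Set.ncard_range_of_injective (injective_pair n),
    Set.ncard_range_of_injective (injective_compl_pair n), Nat.card_eq_fintype_card,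
    Fintype.card_fin]
  ring

theorem g_extremal_points (n : ℕ) :
    (∀ y : Fin (n + 3) → Bool, MinOne (gfun n) y ↔
      ((∃ i : Fin (n + 3), i ≠ 0 ∧ y = fun j => decide (j = 0 ∨ j = i)) ∨
        y = fun j => decide (j ≠ 0))) ∧
    (∀ y : Fin (n + 3) → Bool, MaxZero (gfun n) y ↔
      ((∃ i : Fin (n + 3), i ≠ 0 ∧ y = fun j => decide (j ≠ 0 ∧ j ≠ i)) ∨
        y = fun j => decide (j = 0))) ∧
    {y : Fin (n + 3) → Bool | MinOne (gfun n) y ∨ MaxZero (gfun n) y}.ncard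
      = 2 * (n + 3) :=
  ⟨minOne_gfun_iff, maxZero_gfun_iff, ncard_setOf_minOne_or_maxZero_gfun n⟩
end

section
/- For n ≥ 4, the function f_n(x₁,…,x_n) = (x₁∧x₂)∨(x₁∧x₃)∨…∨(x₁∧x_{n−1})∨(x₂∧x₃∧…∧x_n) is a threshold function, represented by: f_n(x)=0 if and only if (2n−5)x₁ + 2(x₂+…+x_{n−1}) + x_n ≤ 2n−4. -/
/-- The real value of a Boolean coordinate. -/
def bval (b : Bool) : ℝ := if b then 1 else 0

/-- `f` is 2-summable: there are two false points and two true points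
(repetitions allowed) with equal vector sums in `ℝ^n`. -/
def TwoSummable {n : ℕ} (f : (Fin n → Bool) → Bool) : Prop :=
  ∃ x₁ x₂ y₁ y₂ : Fin n → Bool,
    f x₁ = false ∧ f x₂ = false ∧ f y₁ = true ∧ f y₂ = true ∧
    ∀ i : Fin n, bval (x₁ i) + bval (x₂ i) = bval (y₁ i) + bval (y₂ i)

/-- `f` is a threshold function: for some real weights `w` and threshold `t`,
`f x = 0` iff `∑ wᵢ xᵢ ≤ t`. -/
def IsThreshold {n : ℕ} (f : (Fin n → Bool) → Bool) : Prop :=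
  ∃ (w : Fin n → ℝ) (t : ℝ), ∀ x : Fin n → Bool,
    f x = false ↔ ∑ i, w i * bval (x i) ≤ t

/-- The function `fₙ = x₁x₂ ∨ x₁x₃ ∨ … ∨ x₁x_{n−1} ∨ x₂x₃⋯xₙ` on `n + 4 ≥ 4`
variables (coordinate `0` plays the role of `x₁`, the last coordinate of `xₙ`). -/
def ffun (n : ℕ) : (Fin (n + 4) → Bool) → Bool := fun x =>
  (x 0 && decide (∃ i : Fin (n + 4), i ≠ 0 ∧ i ≠ Fin.last (n + 3) ∧ x i = true)) ||
    decide (∀ i : Fin (n + 4), i ≠ 0 → x i = true)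

/-- The weighted sum `(2n−5)x₁ + 2(x₂ + ⋯ + x_{n−1}) + xₙ` (with `n + 4` playing
the role of `n`). -/
noncomputable def fsum (n : ℕ) (x : Fin (n + 4) → Bool) : ℝ :=
  (2 * ((n : ℝ) + 4) - 5) * bval (x 0) +
    2 * ∑ i ∈ Finset.univ.filter
        (fun i : Fin (n + 4) => i ≠ 0 ∧ i ≠ Fin.last (n + 3)), bval (x i) +
    bval (x (Fin.last (n + 3)))

/-!
Write `k` for the number of middle coordinates `x₂, …, x_{n−1}` equal to `1`. Both `fₙ` and the
weighted sum depend on `x` only through `x₁`, `k` and `xₙ`: `fₙ = x₁ [k > 0] ∨ [k = n − 2] xₙ`,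
and the sum is `(2n − 5) x₁ + 2k + xₙ`. With `x₁ = 1` the sum is at most `2n − 4` exactly when
`2k + xₙ ≤ 1`, i.e. `k = 0`; with `x₁ = 0` it exceeds `2n − 4 = 2(n − 2)` exactly when `k = n − 2`
and `xₙ = 1`.
-/

open Finset

section Counting

variable {ι : Type*} (s : Finset ι) (x : ι → Bool)

def trueCount : ℕ := #(s.filter (fun i => x i = true))

lemma sum_bval_eq_trueCount : ∑ i ∈ s, bval (x i) = trueCount s x := by
  simp only [bval, trueCount, sum_boole]

lemma trueCount_le_card : trueCount s x ≤ #s := card_filter_le _ _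

lemma trueCount_pos_iff : 0 < trueCount s x ↔ ∃ i ∈ s, x i = true := by
  rw [trueCount, card_pos, filter_nonempty_iff]

lemma trueCount_eq_card_iff : trueCount s x = #s ↔ ∀ i ∈ s, x i = true :=
  card_filter_eq_iff

end Counting

/-- The coordinates `x₂, …, x_{n−1}` of `fₙ`. -/
def middle (n : ℕ) : Finset (Fin (n + 4)) :=
  univ.filter (fun i => i ≠ 0 ∧ i ≠ Fin.last (n + 3))

section Middle

variable {n : ℕ}

lemma mem_middle {i : Fin (n + 4)} : i ∈ middle n ↔ i ≠ 0 ∧ i ≠ Fin.last (n + 3) := by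
  simp [middle]

lemma middle_eq_sdiff : middle n = univ \ {0, Fin.last (n + 3)} := by
  ext i; simp [middle]

lemma card_middle : #(middle n) = n + 2 := by
  rw [middle_eq_sdiff, card_sdiff_of_subset (subset_univ _),
    card_pair Fin.last_pos.ne]
  simp

lemma exists_middle_true_iff (x : Fin (n + 4) → Bool) :
    (∃ i, i ≠ 0 ∧ i ≠ Fin.last (n + 3) ∧ x i = true) ↔ 0 < trueCount (middle n) x := by
  simp only [trueCount_pos_iff, mem_middle, and_assoc]

lemma forall_ne_zero_true_iff (x : Fin (n + 4) → Bool) :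
    (∀ i, i ≠ 0 → x i = true) ↔
      trueCount (middle n) x = n + 2 ∧ x (Fin.last (n + 3)) = true := by
  have hcount := trueCount_eq_card_iff (middle n) x
  rw [card_middle] at hcount
  rw [hcount]
  constructor
  · intro h
    exact ⟨fun i hi => h i (mem_middle.1 hi).1, h _ Fin.last_pos.ne'⟩
  · rintro ⟨hmid, hlast⟩ i hi
    by_cases hil : i = Fin.last (n + 3)
    · exact hil ▸ hlast
    · exact hmid i (mem_middle.2 ⟨hi, hil⟩)

end Middle

lemma ffun_eq (n : ℕ) (x : Fin (n + 4) → Bool) :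
    ffun n x = ((x 0 && decide (0 < trueCount (middle n) x)) ||
      (decide (trueCount (middle n) x = n + 2) && x (Fin.last (n + 3)))) := by
  simp only [ffun, exists_middle_true_iff, forall_ne_zero_true_iff, Bool.decide_and,
    Bool.decide_eq_true]

lemma fsum_eq (n : ℕ) (x : Fin (n + 4) → Bool) :
    fsum n x = (2 * ((n + 2 : ℕ) : ℝ) - 1) * bval (x 0) + 2 * trueCount (middle n) x +
      bval (x (Fin.last (n + 3))) := by
  rw [fsum, ← middle, sum_bval_eq_trueCount]
  push_cast
  ring

lemma fsum_eq_sum_mul (n : ℕ) (x : Fin (n + 4) → Bool) :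
    fsum n x = ∑ i, (if i = 0 then 2 * ((n : ℝ) + 4) - 5
        else if i = Fin.last (n + 3) then 1 else 2) * bval (x i) := by
  have hmid : ∀ i ∈ middle n, (if i = 0 then 2 * ((n : ℝ) + 4) - 5
      else if i = Fin.last (n + 3) then 1 else 2) * bval (x i) = 2 * bval (x i) := by
    intro i hi
    rw [if_neg (mem_middle.1 hi).1, if_neg (mem_middle.1 hi).2]
  rw [← sum_sdiff (subset_univ {0, Fin.last (n + 3)}), ← middle_eq_sdiff, sum_congr rfl hmid,
    ← mul_sum, sum_pair Fin.last_pos.ne, if_pos rfl, if_neg Fin.last_pos.ne', if_pos rfl, fsum,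
    ← middle]
  ring

lemma reduced_eq_false_iff_weighted_le {m k : ℕ} (hm : 0 < m) (hk : k ≤ m) (a b : Bool) :
    ((a && decide (0 < k)) || (decide (k = m) && b)) = false ↔
      (2 * (m : ℝ) - 1) * bval a + 2 * k + bval b ≤ 2 * m := by
  -- as `0 < m`, the coefficient is a natural number and each case becomes `ℕ` arithmetic
  have hcoef : 2 * (m : ℝ) - 1 = ((2 * m - 1 : ℕ) : ℝ) := by
    rw [Nat.cast_sub (by omega)]; push_cast; ring
  rw [hcoef]
  cases a <;> cases b <;>
    simp only [bval, Bool.false_eq_true, ↓reduceIte, Bool.true_and, Bool.false_and,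
      Bool.and_true, Bool.and_false, Bool.or_false, Bool.false_or, Bool.or_self,
      Bool.or_eq_false_iff, decide_eq_false_iff_not, true_iff, mul_one, mul_zero, zero_add,
      add_zero] <;>
    norm_cast <;> omega

theorem f_is_threshold (n : ℕ) :
    IsThreshold (ffun n) ∧
    ∀ x : Fin (n + 4) → Bool,
      ffun n x = false ↔ fsum n x ≤ 2 * ((n : ℝ) + 4) - 4 := by
  have key : ∀ x, ffun n x = false ↔ fsum n x ≤ 2 * ((n : ℝ) + 4) - 4 := by
    intro x
    have hk : trueCount (middle n) x ≤ n + 2 := (trueCount_le_card _ _).trans_eq card_middle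
    have ht : 2 * ((n : ℝ) + 4) - 4 = 2 * ((n + 2 : ℕ) : ℝ) := by push_cast; ring
    rw [ffun_eq, fsum_eq, ht, reduced_eq_false_iff_weighted_le (by omega) hk]
  exact ⟨⟨_, _, fun x => fsum_eq_sum_mul n x ▸ key x⟩, key⟩
end

section
/- For n ≥ 4 and f_n = (x₁∧x₂)∨…∨(x₁∧x_{n−1})∨(x₂∧…∧x_n), each of the n−2 maximal zeros y_i (having 0 exactly in coordinates 1 and i+1, for 1 ≤ i ≤ n−2) is not essential for f_n among threshold functions: any Boolean function g agreeing with f_n everywhere except at y_i, with g(y_i)=1, is 2-summable and hence not threshold. Specifically, with x_i the minimal one having 1's exactly in coordinates 1 and i+1, z₁ = (0,1,…,1,0), z₂ = (1,0,…,0,1), one has x_i + y_i = z₁ + z₂, g(y_i)=g(x_i)=1 while g(z₁)=g(z₂)=0. -/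
/-!
Raising `f_n` at the maximal zero `y` (zero exactly at `0` and `j`) gives a function `g` for
which `x + y = z₁ + z₂`, where `x` is the minimal one supported on `{0, j}`, `z₁` is zero
exactly at `0` and the last coordinate and `z₂` is supported there. Since `g(x) = g(y) = 1` and
`g(z₁) = g(z₂) = 0`, summing the weights of a threshold representation over both sides gives
`2t < 2t`. That `y` is a maximal zero at all is where `n ≥ 4` enters: raising `y` at `0` meets
some coordinate outside `{0, j, last}`, raising it at `j` completes the term `x₂ ⋯ xₙ`.
-/

theorem TwoSummable.not_isThreshold {m : ℕ} {f : (Fin m → Bool) → Bool}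
    (h : TwoSummable f) : ¬ IsThreshold f := by
  rintro ⟨w, t, hw⟩
  obtain ⟨x₁, x₂, y₁, y₂, hx₁, hx₂, hy₁, hy₂, hsum⟩ := h
  have hy₁' : t < ∑ i, w i * bval (y₁ i) := not_le.1 fun h => by simp [(hw y₁).2 h] at hy₁
  have hy₂' : t < ∑ i, w i * bval (y₂ i) := not_le.1 fun h => by simp [(hw y₂).2 h] at hy₂
  have hweights : ∑ i, w i * bval (x₁ i) + ∑ i, w i * bval (x₂ i) =
      ∑ i, w i * bval (y₁ i) + ∑ i, w i * bval (y₂ i) := by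
    simp only [← Finset.sum_add_distrib, ← mul_add, hsum]
  linarith [(hw x₁).1 hx₁, (hw x₂).1 hx₂]

theorem bval_decide_add_bval_decide_not (p : Prop) [Decidable p] :
    bval (decide p) + bval (decide ¬p) = 1 := by
  by_cases hp : p <;> simp [bval, hp]

theorem Fintype.exists_ne_ne_ne {α : Type*} [Fintype α] [DecidableEq α]
    (hα : 3 < Fintype.card α) (a b c : α) : ∃ i, i ≠ a ∧ i ≠ b ∧ i ≠ c := by
  obtain ⟨i, -, hi⟩ := Finset.exists_mem_notMem_of_card_lt_card
    (s := {a, b, c}) (t := Finset.univ) (Finset.card_le_three.trans_lt hα)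
  simp only [Finset.mem_insert, Finset.mem_singleton, not_or] at hi
  exact ⟨i, hi⟩

section ffun

variable {n : ℕ}

theorem ffun_eq_true_of_head {x : Fin (n + 4) → Bool} (h0 : x 0 = true) {i : Fin (n + 4)}
    (hi0 : i ≠ 0) (hil : i ≠ Fin.last (n + 3)) (hi : x i = true) : ffun n x = true := by
  simp only [ffun, Bool.or_eq_true, Bool.and_eq_true, decide_eq_true_eq]
  exact Or.inl ⟨h0, i, hi0, hil, hi⟩

theorem ffun_eq_true_of_tail {x : Fin (n + 4) → Bool} (h : ∀ i, i ≠ 0 → x i = true) :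
    ffun n x = true := by
  simp only [ffun, Bool.or_eq_true, decide_eq_true_eq]
  exact Or.inr h

theorem ffun_eq_false_of_zero_ne {x : Fin (n + 4) → Bool} (hx : x 0 = false) {j : Fin (n + 4)}
    (hj0 : j ≠ 0) (hj : x j = false) : ffun n x = false := by
  simp only [ffun, hx, Bool.false_and, Bool.false_or, decide_eq_false_iff_not, not_forall]
  exact ⟨j, hj0, by simp [hj]⟩

theorem ffun_pair_eq_true {j : Fin (n + 4)} (hj0 : j ≠ 0) (hjl : j ≠ Fin.last (n + 3)) :
    ffun n (fun t => decide (t = 0 ∨ t = j)) = true :=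
  ffun_eq_true_of_head (by simp) hj0 hjl (by simp)

theorem ffun_compl_pair_eq_false {j : Fin (n + 4)} (hj0 : j ≠ 0) :
    ffun n (fun t => decide (t ≠ 0 ∧ t ≠ j)) = false :=
  ffun_eq_false_of_zero_ne (by simp) hj0 (by simp)

theorem ffun_zero_last_eq_false :
    ffun n (fun t => decide (t = 0 ∨ t = Fin.last (n + 3))) = false := by
  simp only [ffun, Bool.or_eq_false_iff, Bool.and_eq_false_iff, decide_eq_false_iff_not,
    decide_eq_true_eq, not_exists, not_forall]
  refine ⟨Or.inr fun i ⟨hi0, hil, hi⟩ => hi.elim hi0 hil, ?_⟩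
  obtain ⟨i, hi0, hil, -⟩ := Fintype.exists_ne_ne_ne (by simp) (0 : Fin (n + 4)) (Fin.last _) 0
  exact ⟨i, hi0, by simp [hi0, hil]⟩

theorem ffun_maxZero_compl_pair {j : Fin (n + 4)} (hj0 : j ≠ 0) :
    MaxZero (ffun n) (fun t => decide (t ≠ 0 ∧ t ≠ j)) := by
  refine ⟨ffun_compl_pair_eq_false hj0, fun z hle hne => ?_⟩
  have hz : ∀ t, t ≠ 0 → t ≠ j → z t = true := fun t ht0 htj =>
    Bool.eq_true_of_true_le (by simpa [ht0, htj] using hle t)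
  cases hz0 : z 0
  · have hzj : z j = true := by
      by_contra hzj
      refine hne (funext fun t => ?_)
      by_cases ht0 : t = 0
      · simp [ht0, hz0]
      by_cases htj : t = j
      · simpa [htj, hj0] using hzj
      · simp [ht0, htj, hz t ht0 htj]
    refine ffun_eq_true_of_tail fun t ht0 => ?_
    by_cases htj : t = j
    · exact htj ▸ hzj
    · exact hz t ht0 htj
  · obtain ⟨i, hi0, hil, hij⟩ := Fintype.exists_ne_ne_ne (by simp) 0 (Fin.last (n + 3)) j
    exact ffun_eq_true_of_head hz0 hi0 hil (hz i hi0 hij)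

end ffun

theorem f_maximal_zeros_not_essential (n : ℕ) (j : Fin (n + 4))
    (hj0 : j ≠ 0) (hjl : j ≠ Fin.last (n + 3)) :
    MaxZero (ffun n) (fun t => decide (t ≠ 0 ∧ t ≠ j)) ∧
    ∀ g : (Fin (n + 4) → Bool) → Bool,
      g (fun t => decide (t ≠ 0 ∧ t ≠ j)) = true →
      (∀ v : Fin (n + 4) → Bool,
        v ≠ (fun t => decide (t ≠ 0 ∧ t ≠ j)) → g v = ffun n v) →
      (∀ t : Fin (n + 4),
        bval (decide (t = 0 ∨ t = j)) + bval (decide (t ≠ 0 ∧ t ≠ j)) =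
          bval (decide (t ≠ 0 ∧ t ≠ Fin.last (n + 3))) +
            bval (decide (t = 0 ∨ t = Fin.last (n + 3)))) ∧
      g (fun t => decide (t = 0 ∨ t = j)) = true ∧
      g (fun t => decide (t ≠ 0 ∧ t ≠ Fin.last (n + 3))) = false ∧
      g (fun t => decide (t = 0 ∨ t = Fin.last (n + 3))) = false ∧
      TwoSummable g ∧ ¬ IsThreshold g := by
  refine ⟨ffun_maxZero_compl_pair hj0, fun g hgy hg => ?_⟩
  have hsum : ∀ t : Fin (n + 4),
      bval (decide (t = 0 ∨ t = j)) + bval (decide (t ≠ 0 ∧ t ≠ j)) =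
        bval (decide (t ≠ 0 ∧ t ≠ Fin.last (n + 3))) +
          bval (decide (t = 0 ∨ t = Fin.last (n + 3))) := fun t => by
    have h₁ := bval_decide_add_bval_decide_not (t = 0 ∨ t = j)
    have h₂ := bval_decide_add_bval_decide_not (t = 0 ∨ t = Fin.last (n + 3))
    simp only [not_or] at h₁ h₂
    linarith
  have hgx : g (fun t => decide (t = 0 ∨ t = j)) = true :=
    (hg _ (Function.ne_iff.2 ⟨0, by simp⟩)).trans (ffun_pair_eq_true hj0 hjl)
  have hgz₁ : g (fun t => decide (t ≠ 0 ∧ t ≠ Fin.last (n + 3))) = false :=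
    (hg _ (Function.ne_iff.2 ⟨j, by simp [hj0, hjl]⟩)).trans
      (ffun_compl_pair_eq_false Fin.last_pos.ne')
  have hgz₂ : g (fun t => decide (t = 0 ∨ t = Fin.last (n + 3))) = false :=
    (hg _ (Function.ne_iff.2 ⟨0, by simp⟩)).trans ffun_zero_last_eq_false
  have hg2 : TwoSummable g := ⟨_, _, _, _, hgz₁, hgz₂, hgx, hgy, fun t => (hsum t).symm⟩
  exact ⟨hsum, hgx, hgz₁, hgz₂, hg2, hg2.not_isThreshold⟩
end
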